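/- arXiv:1901.08489 — 3 statements merged into one kernel-verified Lean document; each statement's English description precedes it below -/
import Mathlib

section
/- Let $R$ be a commutative ring and let $f$ be a unit of the Laurent polynomial ring $R[T,T^{-1}]$. Then there exists a locally constant function $n : \operatorname{Spec} R \to \mathbb{Z}$ (locally constant for the Zariski topology on the prime spectrum) such that for every prime ideal $\mathfrak{p}$ of $R$ and every ring homomorphism $\varphi : R \to K$ into a field $K$ with kernel $\mathfrak{p}$, the image of $f$ under the induced ring homomorphism $R[T,T^{-1}] \to K[T,T^{-1}]$ equals $C(c) \cdot T^{n(\mathfrak{p})}$ for some nonzero $c \in K$. -/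
/-!
Over a domain the units of `R[T;T⁻¹]` are the monomials `C c * T d` with `c` a unit: clearing
denominators, a unit becomes a divisor of a power of the prime `X` in `R[X]`. Hence a unit `f` of
`R[T;T⁻¹]` has, modulo each prime `p`, exactly one coefficient `f_d` outside `p`; setting
`n p = d`, the fibre `n⁻¹ {d}` is the basic open set `D(f_d)`.
-/

open LaurentPolynomial

/-- The ring homomorphism `R[T,T⁻¹] →+* K[T,T⁻¹]` induced by a ring homomorphism
`φ : R →+* K`, applying `φ` to each coefficient (so `C r ↦ C (φ r)` and `T n ↦ T n`). -/
noncomputable def LaurentPolynomial.mapRingHom {R K : Type*} [CommSemiring R] [CommSemiring K]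
    (φ : R →+* K) : LaurentPolynomial R →+* LaurentPolynomial K :=
  AddMonoidAlgebra.liftNCRingHom ((C : K →+* LaurentPolynomial K).comp φ)
    { toFun := fun n => T (Multiplicative.toAdd n)
      map_one' := T_zero (R := K)
      map_mul' := fun m n => T_add (R := K) (Multiplicative.toAdd m) (Multiplicative.toAdd n) }
    fun _ _ => Commute.all _ _

namespace LaurentPolynomial

section Semiring

variable {R S : Type*} [CommSemiring R] [CommSemiring S]

theorem coeff_C_mul_T (c : R) (d n : ℤ) [Decidable (d = n)] :
    (C c * T d).coeff n = if d = n then c else 0 := by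
  rw [← single_eq_C_mul_T, AddMonoidAlgebra.coeff_single, Finsupp.single_apply]

theorem mapRingHom_single (φ : R →+* S) (n : ℤ) (a : R) :
    mapRingHom φ (.single n a) = .single n (φ a) := by
  show AddMonoidAlgebra.liftNC _ _ _ = _
  rw [AddMonoidAlgebra.liftNC_single, single_eq_C_mul_T]
  rfl

theorem mapRingHom_eq_addMonoidAlgebra_mapRingHom (φ : R →+* S) :
    mapRingHom φ = AddMonoidAlgebra.mapRingHom ℤ φ :=
  AddMonoidAlgebra.ringHom_ext
    (fun _ ↦ by simp only [mapRingHom_single, AddMonoidAlgebra.mapRingHom_single])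
    (fun _ ↦ by simp only [mapRingHom_single, AddMonoidAlgebra.mapRingHom_single])

theorem coeff_mapRingHom (φ : R →+* S) (f : R[T;T⁻¹]) (n : ℤ) :
    (mapRingHom φ f).coeff n = φ (f.coeff n) := by
  rw [mapRingHom_eq_addMonoidAlgebra_mapRingHom, AddMonoidAlgebra.coeff_mapRingHom]

theorem mapRingHom_eq_C_mul_T_of_forall_ne (φ : R →+* S) (f : R[T;T⁻¹]) (d : ℤ)
    (h : ∀ n ≠ d, φ (f.coeff n) = 0) :
    mapRingHom φ f = C (φ (f.coeff d)) * T d := by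
  classical
  ext n
  rw [coeff_mapRingHom, coeff_C_mul_T]
  split_ifs with hdn
  · rw [hdn]
  · exact h n (Ne.symm hdn)

end Semiring

open Polynomial in
theorem exists_C_mul_T_of_isUnit {R : Type*} [CommRing R] [IsDomain R] {f : R[T;T⁻¹]}
    (hf : IsUnit f) : ∃ (c : R) (d : ℤ), IsUnit c ∧ f = C c * T d := by
  obtain ⟨g, hfg⟩ := hf.exists_right_inv
  obtain ⟨a, f', hf'⟩ := f.exists_T_pow
  obtain ⟨b, g', hg'⟩ := g.exists_T_pow
  have hmul : f' * g' = X ^ (a + b) := toLaurent_injective <| by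
    rw [map_mul, hf', hg', toLaurent_X_pow, Nat.cast_add, T_add,
      mul_mul_mul_comm, hfg, one_mul]
  obtain ⟨i, -, u, hu⟩ := (dvd_prime_pow prime_X _).mp ⟨g', hmul.symm⟩
  obtain ⟨r, hr, hru⟩ := Polynomial.isUnit_iff.mp u⁻¹.isUnit
  have hf'' : f' = Polynomial.C r * X ^ i := by
    rw [hru, ← hu, mul_comm, Units.mul_inv_cancel_right]
  refine ⟨r, i - a, hr, ?_⟩
  calc f = toLaurent f' * T (-a) := by rw [hf', mul_T_assoc, add_neg_cancel, T_zero, mul_one]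
    _ = C r * T (i - a) := by
      rw [hf'', map_mul, toLaurent_C, toLaurent_X_pow, mul_assoc, ← T_add, sub_eq_add_neg]

theorem exists_forall_coeff_notMem_iff_of_isUnit {R : Type*} [CommRing R] {f : R[T;T⁻¹]}
    (hf : IsUnit f) (P : Ideal R) [P.IsPrime] : ∃ d : ℤ, ∀ n, f.coeff n ∉ P ↔ n = d := by
  classical
  obtain ⟨c, d, hc, hfc⟩ :=
    exists_C_mul_T_of_isUnit (hf.map (mapRingHom (Ideal.Quotient.mk P)))
  refine ⟨d, fun n ↦ ?_⟩
  have hcoeff := coeff_mapRingHom (Ideal.Quotient.mk P) f n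
  rw [hfc, coeff_C_mul_T] at hcoeff
  rw [← Ideal.Quotient.eq_zero_iff_mem, ← hcoeff, eq_comm (a := n)]
  split_ifs with hdn
  · simpa [hdn] using hc.ne_zero
  · simp [hdn]

end LaurentPolynomial

/-- For a unit `f` of the Laurent polynomial ring over a commutative ring `R`, there is a
Zariski-locally constant function `n : Spec R → ℤ` such that at each prime `p`, the image of
`f` in the Laurent polynomial ring over any field `K` under (the map induced by) any ring
homomorphism `R → K` with kernel `p` is a nonzero constant times `T (n p)`. -/
theorem laurentPolynomial_unit_locally_constant_degree
    {R : Type u} [CommRing R] (f : LaurentPolynomial R) (hf : IsUnit f) :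
    ∃ n : PrimeSpectrum R → ℤ, IsLocallyConstant n ∧
      ∀ (p : PrimeSpectrum R) (K : Type v) [Field K] (φ : R →+* K),
        RingHom.ker φ = p.asIdeal →
          ∃ c : K, c ≠ 0 ∧
            LaurentPolynomial.mapRingHom φ f = C c * T (n p) := by
  choose n hn using fun p : PrimeSpectrum R ↦ exists_forall_coeff_notMem_iff_of_isUnit hf p.asIdeal
  refine ⟨n, ?_, fun p K _ φ hker ↦ ?_⟩
  · refine IsLocallyConstant.iff_isOpen_fiber.2 fun d ↦ ?_
    have hfiber : n ⁻¹' {d} = PrimeSpectrum.basicOpen (f.coeff d) := by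
      ext p
      exact eq_comm.trans (hn p d).symm
    rw [hfiber]
    exact (PrimeSpectrum.basicOpen _).isOpen
  · have hzero : ∀ i, φ (f.coeff i) = 0 ↔ f.coeff i ∈ p.asIdeal := fun i ↦ by
      rw [← RingHom.mem_ker, hker]
    refine ⟨φ (f.coeff (n p)), fun h ↦ (hn p (n p)).2 rfl ((hzero _).1 h), ?_⟩
    exact mapRingHom_eq_C_mul_T_of_forall_ne φ f (n p)
      fun i hi ↦ (hzero i).2 (not_not.1 (mt (hn p i).1 hi))
end

section
/- Let $R$ be a nontrivial reduced commutative ring whose only idempotents are $0$ and $1$, and let $\varphi : R[T,T^{-1}] \to R[T,T^{-1}]$ be an $R$-algebra homomorphism of the Laurent polynomial ring to itself. Then there exist a unique unit $u \in R^\times$ and a unique integer $n \in \mathbb{Z}$ such that $\varphi(T) = C(u) \cdot T^n$. -/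
/-!
`φ (T 1)` is a unit, and clearing denominators of a unit of `R[T;T⁻¹]` and of its inverse gives
polynomials with `p * q = X ^ m`. The products `pᵢ * q_{m-i}` sum to `1` and are pairwise
orthogonal (over each domain `R ⧸ P`, degree and trailing degree force `p` and `q` to be
monomials, and `R` is reduced), so they are complete orthogonal idempotents. Since `R` has no
nontrivial idempotents, one of them is `1`: that `pᵢ` is a unit and all other coefficients of
`p` vanish.
-/

open LaurentPolynomial

theorem CompleteOrthogonalIdempotents.exists_eq_one {R I : Type*} [Semiring R] [Nontrivial R]
    [Fintype I] (hidem : ∀ e : R, IsIdempotentElem e → e = 0 ∨ e = 1) {e : I → R}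
    (he : CompleteOrthogonalIdempotents e) : ∃ i, e i = 1 := by
  by_contra! hne
  have hzero : ∑ i, e i = 0 :=
    Finset.sum_eq_zero fun i _ ↦ (hidem _ (he.idem i)).resolve_right (hne i)
  exact zero_ne_one (hzero.symm.trans he.complete)

namespace Polynomial

theorem coeff_mul_coeff_eq_zero_of_mul_eq_X_pow {S : Type*} [Semiring S] [NoZeroDivisors S]
    {p q : S[X]} {m : ℕ} (h : p * q = X ^ m) {i j : ℕ} (hij : i + j ≠ m) :
    p.coeff i * q.coeff j = 0 := by
  nontriviality S
  have hX : (X : S[X]) ^ m ≠ 0 := pow_ne_zero m X_ne_zero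
  have hp : p ≠ 0 := by rintro rfl; exact hX (by rw [← h, zero_mul])
  have hq : q ≠ 0 := by rintro rfl; exact hX (by rw [← h, mul_zero])
  have hdeg : p.natDegree + q.natDegree = m := by
    rw [← natDegree_mul hp hq, h, natDegree_X_pow]
  have htrail : p.natTrailingDegree + q.natTrailingDegree = m := by
    rw [← natTrailingDegree_mul hp hq, h, natTrailingDegree_X_pow]
  by_contra hne
  have hpi : p.coeff i ≠ 0 := left_ne_zero_of_mul hne
  have hqj : q.coeff j ≠ 0 := right_ne_zero_of_mul hne
  have hi_le := le_natDegree_of_ne_zero hpi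
  have hi_ge := natTrailingDegree_le_of_ne_zero hpi
  have hj_le := le_natDegree_of_ne_zero hqj
  have hj_ge := natTrailingDegree_le_of_ne_zero hqj
  omega

theorem coeff_mul_coeff_eq_zero_of_mul_eq_X_pow_of_isReduced {R : Type*} [CommRing R]
    [IsReduced R] {p q : R[X]} {m : ℕ} (h : p * q = X ^ m) {i j : ℕ} (hij : i + j ≠ m) :
    p.coeff i * q.coeff j = 0 := by
  refine IsNilpotent.eq_zero ((nilpotent_iff_mem_prime).mpr fun P _ ↦ ?_)
  have hmap : p.map (Ideal.Quotient.mk P) * q.map (Ideal.Quotient.mk P) = X ^ m := by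
    rw [← Polynomial.map_mul, h, Polynomial.map_pow, map_X]
  have := coeff_mul_coeff_eq_zero_of_mul_eq_X_pow hmap hij
  rwa [coeff_map, coeff_map, ← map_mul, Ideal.Quotient.eq_zero_iff_mem] at this

open Finset.HasAntidiagonal

variable {R : Type*} [CommRing R] [IsReduced R]

theorem completeOrthogonalIdempotents_coeff_mul_coeff_of_mul_eq_X_pow
    {p q : R[X]} {m : ℕ} (h : p * q = X ^ m) :
    CompleteOrthogonalIdempotents
      (fun x : antidiagonal m ↦ p.coeff x.1.1 * q.coeff x.1.2) := by
  refine CompleteOrthogonalIdempotents.iff_ortho_complete.mpr ⟨?_, ?_⟩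
  · rintro ⟨⟨a, b⟩, hab⟩ ⟨⟨c, d⟩, hcd⟩ hne
    rw [mem_antidiagonal] at hab hcd
    have had : a + d ≠ m := fun had ↦ hne (Subtype.ext (Prod.ext (show a = c by omega) (show b = d by omega)))
    calc p.coeff a * q.coeff b * (p.coeff c * q.coeff d)
        = p.coeff a * q.coeff d * (p.coeff c * q.coeff b) := by ring
      _ = 0 := by rw [coeff_mul_coeff_eq_zero_of_mul_eq_X_pow_of_isReduced h had, zero_mul]
  · rw [Finset.sum_coe_sort (antidiagonal m) (fun x ↦ p.coeff x.1 * q.coeff x.2),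
      ← coeff_mul, h, coeff_X_pow_self]

theorem exists_eq_C_mul_X_pow_of_mul_eq_X_pow [Nontrivial R]
    (hidem : ∀ e : R, IsIdempotentElem e → e = 0 ∨ e = 1)
    {p q : R[X]} {m : ℕ} (h : p * q = X ^ m) :
    ∃ (u : Rˣ) (n : ℕ), p = C (u : R) * X ^ n := by
  obtain ⟨⟨⟨a, b⟩, hab⟩, hone⟩ :=
    (completeOrthogonalIdempotents_coeff_mul_coeff_of_mul_eq_X_pow h).exists_eq_one hidem
  rw [mem_antidiagonal] at hab
  refine ⟨(IsUnit.of_mul_eq_one _ hone).unit, a, ext fun i ↦ ?_⟩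
  rw [coeff_C_mul_X_pow, IsUnit.unit_spec]
  split_ifs with hi
  · rw [hi]
  · have hib : i + b ≠ m := by omega
    calc p.coeff i = p.coeff i * (p.coeff a * q.coeff b) := by rw [hone, mul_one]
      _ = p.coeff i * q.coeff b * p.coeff a := by ring
      _ = 0 := by rw [coeff_mul_coeff_eq_zero_of_mul_eq_X_pow_of_isReduced h hib, zero_mul]

end Polynomial

namespace LaurentPolynomial

theorem C_mul_T_inj {R : Type*} [Semiring R] {a b : R} (ha : a ≠ 0) {m n : ℤ}
    (h : (C a * T m : R[T;T⁻¹]) = C b * T n) : a = b ∧ m = n := by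
  rw [← single_eq_C_mul_T, ← single_eq_C_mul_T] at h
  rcases AddMonoidAlgebra.single_inj.mp h with ⟨hmn, hab⟩ | ⟨ha0, _⟩
  · exact ⟨hab, hmn⟩
  · exact absurd ha0 ha

theorem exists_eq_C_mul_T_of_isUnit {R : Type*} [CommRing R] [Nontrivial R] [IsReduced R]
    (hidem : ∀ e : R, IsIdempotentElem e → e = 0 ∨ e = 1) {f : R[T;T⁻¹]} (hf : IsUnit f) :
    ∃ (u : Rˣ) (n : ℤ), f = C (u : R) * T n := by
  obtain ⟨g, hfg⟩ := isUnit_iff_exists_inv.mp hf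
  obtain ⟨a, p, hp⟩ := exists_T_pow f
  obtain ⟨b, q, hq⟩ := exists_T_pow g
  have hpq : p * q = Polynomial.X ^ (a + b) := by
    apply Polynomial.toLaurent_injective
    rw [map_mul, hp, hq, Polynomial.toLaurent_X_pow]
    calc f * T a * (g * T b) = f * g * (T a * T b) := by ring
      _ = T ((a + b : ℕ) : ℤ) := by rw [hfg, one_mul, ← T_add, Nat.cast_add]
  obtain ⟨u, n, rfl⟩ := Polynomial.exists_eq_C_mul_X_pow_of_mul_eq_X_pow hidem hpq
  refine ⟨u, n - a, ?_⟩
  rw [map_mul, Polynomial.toLaurent_C, Polynomial.toLaurent_X_pow] at hp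
  rw [sub_eq_add_neg, ← mul_T_assoc, hp, mul_T_assoc, add_neg_cancel, T_zero, mul_one]

end LaurentPolynomial

/-- Over a nontrivial reduced commutative ring whose only idempotents are `0` and `1`,
any `R`-algebra endomorphism of the Laurent polynomial ring sends `T` to `C u * T n`
for a unique unit `u` of `R` and a unique integer `n`. -/
theorem laurentPolynomial_algHom_apply_T
    (R : Type*) [CommRing R] [Nontrivial R] [IsReduced R]
    (hidem : ∀ e : R, IsIdempotentElem e → e = 0 ∨ e = 1)
    (φ : LaurentPolynomial R →ₐ[R] LaurentPolynomial R) :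
    ∃! p : Rˣ × ℤ, φ (T 1) = C (p.1 : R) * T p.2 := by
  obtain ⟨u, n, hφ⟩ := exists_eq_C_mul_T_of_isUnit hidem ((isUnit_T 1).map φ)
  refine ⟨(u, n), hφ, fun ⟨v, m⟩ hvm ↦ ?_⟩
  obtain ⟨hvu, hmn⟩ := C_mul_T_inj v.ne_zero (hvm.symm.trans hφ)
  exact Prod.ext (Units.ext hvu) hmn
end

section
/- Let $G$ be a finite tree on vertex set $V$ and let $d : V \to \mathbb{Z}$ be a function with $\sum_{v \in V} d(v) = 0$. Then there exists a unique flow $\lambda$ on $G$ whose divergence at every vertex $v$ equals $d(v)$, i.e., $\sum_{w \in V} \lambda(v,w) = d(v)$ for all $v \in V$. -/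
open SimpleGraph Finset

section Aux

variable {V : Type*} {G : SimpleGraph V}

lemma tree_not_reach (hG : G.IsTree) {v w : V} (hvw : G.Adj v w) :
    ¬ (G.deleteEdges {s(v, w)}).Reachable v w := by
  have h := (isAcyclic_iff_forall_adj_isBridge.mp hG.IsAcyclic) hvw
  rw [isBridge_iff] at h
  exact h

private lemma walk_reach_aux {v w : V} {a c : V} (p : G.Walk a c) :
    (G.deleteEdges {s(v, w)}).Reachable a c ∨ (G.deleteEdges {s(v, w)}).Reachable a v ∨
      (G.deleteEdges {s(v, w)}).Reachable a w := by
  induction p with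
  | nil => exact Or.inl (Reachable.refl _)
  | @cons a b c h q ih =>
    by_cases hc : s(a, b) = s(v, w)
    · rcases Sym2.eq_iff.mp hc with ⟨rfl, rfl⟩ | ⟨rfl, rfl⟩
      · exact Or.inr (Or.inl (Reachable.refl _))
      · exact Or.inr (Or.inr (Reachable.refl _))
    · have hadj : (G.deleteEdges {s(v, w)}).Adj a b :=
        SimpleGraph.deleteEdges_adj.mpr ⟨h, by simpa using hc⟩
      rcases ih with h1 | h1 | h1
      · exact Or.inl (hadj.reachable.trans h1)
      · exact Or.inr (Or.inl (hadj.reachable.trans h1))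
      · exact Or.inr (Or.inr (hadj.reachable.trans h1))

lemma tree_reach_or (hG : G.IsTree) {v w : V} (u : V) :
    (G.deleteEdges {s(v, w)}).Reachable u v ∨ (G.deleteEdges {s(v, w)}).Reachable u w := by
  obtain ⟨p⟩ := hG.isConnected.preconnected u v
  rcases walk_reach_aux (v := v) (w := w) p with h | h | h
  · exact Or.inl h
  · exact Or.inl h
  · exact Or.inr h

private lemma walk_side_aux {v : V} {a c : V} (p : G.Walk a c) :
    a ≠ v → v ∈ p.support → ∃ w, G.Adj v w ∧ (G.deleteEdges {s(v, w)}).Reachable a w := by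
  induction p with
  | nil =>
    intro hav hmem
    simp only [Walk.support_nil, List.mem_singleton] at hmem
    exact absurd hmem.symm hav
  | @cons a b c h q ih =>
    intro hav hmem
    have hmem' : v ∈ q.support := by
      rw [Walk.support_cons, List.mem_cons] at hmem
      exact hmem.resolve_left (fun h' => hav h'.symm)
    by_cases hb : b = v
    · subst hb
      exact ⟨a, h.symm, Reachable.refl _⟩
    · obtain ⟨w, hw, hr⟩ := ih (fun hb' => hb hb') hmem'
      have hne : s(a, b) ≠ s(v, w) := by
        intro hc
        rcases Sym2.eq_iff.mp hc with ⟨rfl, rfl⟩ | ⟨rfl, rfl⟩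
        · exact hav rfl
        · exact hb rfl
      have hadj : (G.deleteEdges {s(v, w)}).Adj a b :=
        SimpleGraph.deleteEdges_adj.mpr ⟨h, by simpa using hne⟩
      exact ⟨w, hw, hadj.reachable.trans hr⟩

lemma exists_side (hG : G.IsTree) {v u : V} (huv : u ≠ v) :
    ∃ w, G.Adj v w ∧ (G.deleteEdges {s(v, w)}).Reachable u w := by
  obtain ⟨p⟩ := hG.isConnected.preconnected u v
  exact walk_side_aux p huv (p.end_mem_support)

lemma side_unique [DecidableEq V] (hG : G.IsTree) {v w₁ w₂ u : V}
    (h₁ : G.Adj v w₁) (h₂ : G.Adj v w₂)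
    (r₁ : (G.deleteEdges {s(v, w₁)}).Reachable u w₁)
    (r₂ : (G.deleteEdges {s(v, w₂)}).Reachable u w₂) : w₁ = w₂ := by
  have key : ∀ (w : V) (hw : G.Adj v w), (G.deleteEdges {s(v, w)}).Reachable u w →
      ∃ q : G.Walk v u, q.IsPath ∧ q.getVert 1 = w := by
    intro w hw hr
    obtain ⟨p0⟩ := hr
    set p : (G.deleteEdges {s(v, w)}).Walk u w := p0.toPath.val with hp
    have hpath : p.IsPath := p0.toPath.2
    have hv : v ∉ p.support := by
      intro hmem
      exact tree_not_reach hG hw ⟨p.dropUntil v hmem⟩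
    have hsub : ∀ e ∈ p.reverse.edges, e ∈ G.edgeSet :=
      fun e he => (edgeSet_subset_edgeSet.mpr (deleteEdges_le _))
        (Walk.edges_subset_edgeSet _ he)
    refine ⟨Walk.cons hw (p.reverse.transfer G hsub), ?_, ?_⟩
    · rw [Walk.cons_isPath_iff]
      refine ⟨(hpath.reverse).transfer _, ?_⟩
      rw [Walk.support_transfer, Walk.support_reverse]
      simpa using hv
    · exact (Walk.getVert_cons_succ (n := 0) _ hw).trans (Walk.getVert_zero _)
  obtain ⟨q₁, hq₁, hg₁⟩ := key w₁ h₁ r₁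
  obtain ⟨q₂, hq₂, hg₂⟩ := key w₂ h₂ r₂
  have := (hG.existsUnique_path v u).unique hq₁ hq₂
  rw [← hg₁, ← hg₂, this]

end Aux

/-- On a finite tree, for any integer-valued function `d` on the vertices summing to zero,
there is a unique flow (skew-symmetric, supported on adjacent pairs) whose divergence at
each vertex `v` is `d v`. -/
theorem existsUnique_flow_with_divergence
    {V : Type*} [Fintype V] (G : SimpleGraph V) (hG : G.IsTree)
    (d : V → ℤ) (hd : ∑ v, d v = 0) :
    ∃! lam : V → V → ℤ,
      (∀ v w, lam v w = - lam w v) ∧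
      (∀ v w, ¬ G.Adj v w → lam v w = 0) ∧
      (∀ v, ∑ w, lam v w = d v) := by
  classical
  -- `side v w` is the set of vertices on the `w`-side of the edge `vw`.
  set side : V → V → Finset V :=
    fun v w => Finset.univ.filter (fun u => (G.deleteEdges {s(v, w)}).Reachable u w) with hside
  have hswap : ∀ v w : V, G.deleteEdges {s(w, v)} = G.deleteEdges {s(v, w)} := by
    intro v w; rw [Sym2.eq_swap]
  have hside_swap : ∀ v w : V,
      side w v = Finset.univ.filter (fun u => (G.deleteEdges {s(v, w)}).Reachable u v) := by
    intro v w; simp only [hside, hswap v w]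
  -- complement property
  have hcompl : ∀ {v w : V}, G.Adj v w → ∀ u : V,
      (G.deleteEdges {s(v, w)}).Reachable u w ↔ ¬ (G.deleteEdges {s(v, w)}).Reachable u v := by
    intro v w hvw u
    constructor
    · intro h1 h2
      exact tree_not_reach hG hvw (h2.symm.trans h1)
    · intro h2
      exact (tree_reach_or hG u).resolve_left h2
  -- the two sides sum to zero
  have hsum2 : ∀ {v w : V}, G.Adj v w →
      (∑ u ∈ side w v, d u) + (∑ u ∈ side v w, d u) = 0 := by
    intro v w hvw
    have h1 : side v w
        = Finset.univ.filter (fun u => ¬ (G.deleteEdges {s(v, w)}).Reachable u v) := by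
      simp only [hside]
      apply Finset.filter_congr
      intro u _
      simpa using hcompl hvw u
    rw [hside_swap v w, h1, Finset.sum_filter_add_sum_filter_not]
    exact hd
  set lam : V → V → ℤ :=
    fun v w => if G.Adj v w then ∑ u ∈ side w v, d u else 0 with hlam
  have hlam_adj : ∀ {v w : V}, G.Adj v w → lam v w = ∑ u ∈ side w v, d u := by
    intro v w hvw; rw [hlam]; simp [hvw]
  -- skew-symmetry
  have hskew : ∀ v w, lam v w = - lam w v := by
    intro v w
    by_cases hvw : G.Adj v w
    · rw [hlam_adj hvw, hlam_adj hvw.symm]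
      have := hsum2 hvw
      linarith
    · have hwv : ¬ G.Adj w v := fun h => hvw h.symm
      rw [hlam]; simp [hvw, hwv]
  -- support
  have hzero : ∀ v w, ¬ G.Adj v w → lam v w = 0 := by
    intro v w hvw; rw [hlam]; simp [hvw]
  -- divergence
  have hdiv : ∀ v, ∑ w, lam v w = d v := by
    intro v
    have h1 : ∑ w, lam v w = ∑ w ∈ Finset.univ.filter (G.Adj v), ∑ u ∈ side w v, d u := by
      rw [Finset.sum_filter]
    have h2 : ∑ w ∈ Finset.univ.filter (G.Adj v), ∑ u ∈ side w v, d u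
        = - ∑ w ∈ Finset.univ.filter (G.Adj v), ∑ u ∈ side v w, d u := by
      rw [← Finset.sum_neg_distrib]
      apply Finset.sum_congr rfl
      intro w hw
      have hvw : G.Adj v w := (Finset.mem_filter.mp hw).2
      have := hsum2 hvw
      linarith
    -- the `w`-sides for neighbors `w` of `v` partition `univ \ {v}`
    have hbi : (Finset.univ.filter (G.Adj v)).biUnion (fun w => side v w)
        = Finset.univ.erase v := by
      ext u
      simp only [Finset.mem_biUnion, Finset.mem_filter, Finset.mem_univ, true_and,
        Finset.mem_erase, and_true, hside]
      constructor
      · rintro ⟨w, hw, hu⟩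
        intro huv
        subst huv
        exact tree_not_reach hG hw hu
      · intro huv
        exact exists_side hG huv
    have hdisj : ∀ w₁ ∈ Finset.univ.filter (G.Adj v), ∀ w₂ ∈ Finset.univ.filter (G.Adj v),
        w₁ ≠ w₂ → Disjoint (side v w₁) (side v w₂) := by
      intro w₁ hw₁ w₂ hw₂ hne
      rw [Finset.disjoint_left]
      intro u hu₁ hu₂
      rw [hside, Finset.mem_filter] at hu₁ hu₂
      exact hne (side_unique hG (Finset.mem_filter.mp hw₁).2 (Finset.mem_filter.mp hw₂).2
        hu₁.2 hu₂.2)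
    have h3 : ∑ w ∈ Finset.univ.filter (G.Adj v), ∑ u ∈ side v w, d u
        = ∑ u ∈ Finset.univ.erase v, d u := by
      rw [← Finset.sum_biUnion hdisj, hbi]
    have h4 : ∑ u ∈ Finset.univ.erase v, d u = - d v := by
      have := Finset.sum_erase_add Finset.univ d (Finset.mem_univ v)
      rw [hd] at this
      linarith
    rw [h1, h2, h3, h4]; ring
  refine ⟨lam, ⟨hskew, hzero, hdiv⟩, ?_⟩
  -- uniqueness
  rintro lam' ⟨hs', hz', hd'⟩
  funext v w
  by_cases hvw : G.Adj v w
  · -- cut computation: `lam' v w` equals the sum of `d` over the `v`-side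
    set Gd := G.deleteEdges {s(v, w)} with hGd
    set B : Finset V := Finset.univ.filter (fun u => Gd.Reachable u v) with hB
    set C : Finset V := Finset.univ.filter (fun u => ¬ Gd.Reachable u v) with hC
    have hvB : v ∈ B := by
      rw [hB]; simp only [Finset.mem_filter, Finset.mem_univ, true_and]
      exact Reachable.refl v
    have hwC : w ∈ C := by
      rw [hC]; simp only [Finset.mem_filter, Finset.mem_univ, true_and]
      intro h
      exact tree_not_reach hG hvw h.symm
    have hcut : ∑ u ∈ B, d u = lam' v w := by
      have e1 : ∑ u ∈ B, d u = ∑ u ∈ B, ∑ x, lam' u x :=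
        Finset.sum_congr rfl (fun u _ => (hd' u).symm)
      have e2 : ∀ u : V, ∑ x, lam' u x = (∑ x ∈ B, lam' u x) + ∑ x ∈ C, lam' u x := by
        intro u
        rw [hB, hC]
        exact (Finset.sum_filter_add_sum_filter_not _ _ _).symm
      have e3 : ∑ u ∈ B, ∑ x ∈ B, lam' u x = 0 := by
        have hcomm : ∑ u ∈ B, ∑ x ∈ B, lam' u x = ∑ x ∈ B, ∑ u ∈ B, lam' u x :=
          Finset.sum_comm
        have hneg : ∑ x ∈ B, ∑ u ∈ B, lam' u x = - ∑ u ∈ B, ∑ x ∈ B, lam' u x := by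
          rw [← Finset.sum_neg_distrib]
          apply Finset.sum_congr rfl
          intro x _
          rw [← Finset.sum_neg_distrib]
          apply Finset.sum_congr rfl
          intro u _
          exact hs' u x
        have := hcomm.trans hneg
        linarith
      have inner_v : ∑ x ∈ C, lam' v x = lam' v w := by
        apply Finset.sum_eq_single_of_mem w hwC
        intro b hb hbw
        have hbv : ¬ Gd.Reachable b v := by
          rw [hC, Finset.mem_filter] at hb
          exact hb.2
        by_cases hadj : G.Adj v b
        · exfalso
          have hne : s(v, b) ≠ s(v, w) := by
            intro hc
            rcases Sym2.eq_iff.mp hc with ⟨-, h2⟩ | ⟨h1, -⟩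
            · exact hbw h2
            · exact G.irrefl (h1 ▸ hvw)
          apply hbv
          have : Gd.Adj b v := by
            rw [hGd]
            refine SimpleGraph.deleteEdges_adj.mpr ⟨hadj.symm, ?_⟩
            rw [Set.mem_singleton_iff, Sym2.eq_swap]
            exact hne
          exact this.reachable
        · exact hz' v b hadj
      have outer : ∑ u ∈ B, ∑ x ∈ C, lam' u x = ∑ x ∈ C, lam' v x := by
        apply Finset.sum_eq_single_of_mem v hvB
        intro u hu huv
        have huvreach : Gd.Reachable u v := by
          rw [hB, Finset.mem_filter] at hu
          exact hu.2
        apply Finset.sum_eq_zero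
        intro x hx
        have hxv : ¬ Gd.Reachable x v := by
          rw [hC, Finset.mem_filter] at hx
          exact hx.2
        by_cases hadj : G.Adj u x
        · exfalso
          by_cases hE : s(u, x) = s(v, w)
          · rcases Sym2.eq_iff.mp hE with ⟨h1, -⟩ | ⟨-, h2⟩
            · exact huv h1
            · exact hxv (by rw [h2])
          · apply hxv
            have : Gd.Adj x u := by
              rw [hGd]
              refine SimpleGraph.deleteEdges_adj.mpr ⟨hadj.symm, ?_⟩
              rw [Set.mem_singleton_iff, Sym2.eq_swap]
              exact hE
            exact this.reachable.trans huvreach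
        · exact hz' u x hadj
      calc ∑ u ∈ B, d u = ∑ u ∈ B, ∑ x, lam' u x := e1
        _ = ∑ u ∈ B, ((∑ x ∈ B, lam' u x) + ∑ x ∈ C, lam' u x) :=
            Finset.sum_congr rfl (fun u _ => e2 u)
        _ = (∑ u ∈ B, ∑ x ∈ B, lam' u x) + ∑ u ∈ B, ∑ x ∈ C, lam' u x :=
            Finset.sum_add_distrib
        _ = lam' v w := by rw [e3, outer, inner_v]; ring
    have hlB : lam v w = ∑ u ∈ B, d u := by
      rw [hlam_adj hvw, hside_swap v w, hB]
    rw [hlB, hcut]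
  · rw [hz' v w hvw, hzero v w hvw]
end
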